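/- Let F be a field, let n ≥ 2, let x ∈ F with x ≠ 1 and x ≠ -1 (in particular x ≠ 0), and let y ∈ F. Then the multiplicative order of the n×n matrix Q(y,x) (in the monoid of n×n matrices over F, where order 0 means infinite order) equals the multiplicative order of x² in F: for every k ≥ 1, Q(y,x)^k = I if and only if (x²)^k = 1. -/

import Mathlib

open Matrix Finset

/-- Generalized Pascal matrix of the first kind: with 1-based indexing the (i,j) entry is
`y^(j-i) * binom(j-1, i-1)` for `j ≥ i` and `0` otherwise. Here indices are 0-based. -/
def pascal1 {R : Type*} [CommRing R] (n : ℕ) (y : R) : Matrix (Fin n) (Fin n) R :=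
  Matrix.of fun i j => if i ≤ j then y ^ (j.val - i.val) * (Nat.choose j.val i.val : R) else 0

/-- Zhang–Liu matrix: with 1-based indexing the (i,j) entry is
`y^(j-i) * x^(i+j-2) * binom(j-1, i-1)` for `j ≥ i` and `0` otherwise. Indices 0-based here. -/
def zhangLiu {R : Type*} [CommRing R] (n : ℕ) (y x : R) : Matrix (Fin n) (Fin n) R :=
  Matrix.of fun i j =>
    if i ≤ j then y ^ (j.val - i.val) * x ^ (i.val + j.val) * (Nat.choose j.val i.val : R) else 0

/-- `D(α)` : the diagonal matrix with (i,i) entry `α^(i-1)` (1-based), i.e. `α^i` 0-based. -/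
def diagD {R : Type*} [CommRing R] (n : ℕ) (α : R) : Matrix (Fin n) (Fin n) R :=
  Matrix.diagonal fun i : Fin n => α ^ i.val

/-! `zhangLiu n y x = D(x²) P(xy)`, where `D(β) = diagD n β` and `P(a) = pascal1 n a`.
Since `a ↦ P(a)` turns addition into multiplication and `P(a) D(β) = D(β) P(βa)`, one gets
`Q(y,x)^k = D(x^{2k}) P(xy (1 + x² + ⋯ + x^{2(k-1)}))`. If `x^{2k} = 1` and `x² ≠ 1` the geometric
sum vanishes and `Q^k = 1`; conversely the second diagonal entry of `Q^k` is `x^{2k}`. -/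

lemma pascal1_apply {R : Type*} [CommRing R] {n : ℕ} (y : R) (i j : Fin n) :
    pascal1 n y i j = y ^ (j.val - i.val) * (j.val.choose i.val : R) := by
  rw [pascal1, of_apply, ite_eq_left_iff, not_le]
  intro h
  rw [Nat.choose_eq_zero_of_lt h, Nat.cast_zero, mul_zero]

-- Terms outside `i ≤ l ≤ j` vanish through the binomial coefficients; on the rest,
-- `C(j,l) C(l,i) = C(j,i) C(j-i,l-i)` turns the sum into the expansion of `(a + b)^(j-i)`.
lemma sum_range_pow_mul_choose_mul_pow_mul_choose {R : Type*} [CommRing R] (a b : R)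
    {i j N : ℕ} (hj : j < N) :
    ∑ l ∈ range N, a ^ (l - i) * (l.choose i : R) * (b ^ (j - l) * (j.choose l : R)) =
      (a + b) ^ (j - i) * (j.choose i : R) := by
  rcases lt_or_ge j i with hji | hij
  · rw [Nat.choose_eq_zero_of_lt hji, Nat.cast_zero, mul_zero]
    refine sum_eq_zero fun l _ => ?_
    rcases lt_or_ge l i with hli | hil
    · rw [Nat.choose_eq_zero_of_lt hli]; simp
    · rw [Nat.choose_eq_zero_of_lt (hji.trans_le hil)]; simp
  obtain ⟨d, rfl⟩ := Nat.exists_eq_add_of_le hij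
  have hvanish : ∀ l ∈ range N, l ∉ range (i + (d + 1)) →
      a ^ (l - i) * (l.choose i : R) * (b ^ (i + d - l) * ((i + d).choose l : R)) = 0 := by
    intro l _ hl
    rw [Nat.choose_eq_zero_of_lt (n := i + d) (by simp at hl; omega)]; simp
  rw [← sum_subset (s₁ := range (i + (d + 1))) (range_subset_range.2 hj) hvanish, sum_range_add,
    sum_eq_zero fun l hl => by rw [Nat.choose_eq_zero_of_lt (mem_range.1 hl)]; simp,
    zero_add, Nat.add_sub_cancel_left, add_pow, sum_mul]
  refine sum_congr rfl fun m hm => ?_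
  have hmd : m ≤ d := Nat.lt_succ_iff.1 (mem_range.1 hm)
  have hchoose : ((i + d).choose (i + m) : R) * ((i + m).choose i : R) =
      ((i + d).choose i : R) * (d.choose m : R) := by
    have h := Nat.choose_mul (n := i + d) (k := i + m) (s := i) (by omega)
    rw [Nat.add_sub_cancel_left, Nat.add_sub_cancel_left] at h
    exact_mod_cast congrArg (Nat.cast : ℕ → R) h
  rw [Nat.add_sub_cancel_left, Nat.add_sub_add_left]
  linear_combination a ^ m * b ^ (d - m) * hchoose

section

variable {R : Type*} [CommRing R] (n : ℕ)

lemma pascal1_mul (a b : R) : pascal1 n a * pascal1 n b = pascal1 n (a + b) := by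
  ext i j
  rw [mul_apply, pascal1_apply, ← sum_range_pow_mul_choose_mul_pow_mul_choose a b j.isLt]
  simp only [pascal1_apply]
  exact Fin.sum_univ_eq_sum_range
    (fun l => a ^ (l - i) * (l.choose i : R) * (b ^ (j.val - l) * (j.val.choose l : R))) n

lemma pascal1_zero : pascal1 n (0 : R) = 1 := by
  ext i j
  rw [pascal1_apply, one_apply]
  rcases lt_trichotomy i j with hij | rfl | hji
  · rw [zero_pow (Nat.sub_ne_zero_of_lt hij), zero_mul, if_neg hij.ne]
  · simp
  · rw [Nat.choose_eq_zero_of_lt hji, Nat.cast_zero, mul_zero, if_neg hji.ne']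

lemma diagD_one : diagD n (1 : R) = 1 := by
  simp [diagD]

lemma diagD_mul_diagD (α β : R) : diagD n α * diagD n β = diagD n (α * β) := by
  simp only [diagD, diagonal_mul_diagonal, mul_pow]

lemma pascal1_mul_diagD (a β : R) : pascal1 n a * diagD n β = diagD n β * pascal1 n (β * a) := by
  ext i j
  simp only [pascal1, diagD, mul_diagonal, diagonal_mul, of_apply]
  split_ifs with hij
  · rw [← pow_mul_pow_sub β hij, mul_pow]
    ring
  · simp

lemma zhangLiu_eq_diagD_mul_pascal1 (y x : R) :
    zhangLiu n y x = diagD n (x ^ 2) * pascal1 n (x * y) := by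
  ext i j
  simp only [zhangLiu, pascal1, diagD, diagonal_mul, of_apply]
  split_ifs with hij
  · rw [show i.val + j.val = 2 * i.val + (j.val - i.val) by omega]
    ring
  · simp

lemma diagD_mul_pascal1_pow (β a : R) (k : ℕ) :
    (diagD n β * pascal1 n a) ^ k = diagD n (β ^ k) * pascal1 n (a * ∑ t ∈ range k, β ^ t) := by
  induction k with
  | zero => simp [diagD_one, pascal1_zero]
  | succ k ih =>
    rw [pow_succ, ih, mul_assoc, ← mul_assoc (pascal1 n _), pascal1_mul_diagD, mul_assoc,
      pascal1_mul, ← mul_assoc, diagD_mul_diagD, ← pow_succ, geom_sum_succ]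
    congr 2
    ring

lemma diagD_mul_pascal1_pow_eq_one_iff [NoZeroDivisors R] (hn : 2 ≤ n) {β : R} (hβ : β ≠ 1)
    (a : R) (k : ℕ) : (diagD n β * pascal1 n a) ^ k = 1 ↔ β ^ k = 1 := by
  rw [diagD_mul_pascal1_pow]
  constructor
  · intro h
    have h11 := congrFun (congrFun h ⟨1, hn⟩) ⟨1, hn⟩
    simpa [diagD, diagonal_mul, pascal1_apply] using h11
  · intro h
    have hgeom : ∑ t ∈ range k, β ^ t = 0 := by
      have := geom_sum_mul β k
      rw [h, sub_self] at this
      exact (mul_eq_zero.1 this).resolve_right (sub_ne_zero.2 hβ)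
    rw [h, hgeom, mul_zero, diagD_one, pascal1_zero, one_mul]

end

theorem zhangLiu_order {F : Type*} [Field F] (n : ℕ) (hn : 2 ≤ n)
    (x y : F) (hx1 : x ≠ 1) (hx2 : x ≠ -1) :
    orderOf (zhangLiu n y x) = orderOf (x ^ 2) ∧
      ∀ k : ℕ, 1 ≤ k → (zhangLiu n y x ^ k = 1 ↔ (x ^ 2) ^ k = 1) := by
  have key (k : ℕ) : zhangLiu n y x ^ k = 1 ↔ (x ^ 2) ^ k = 1 := by
    rw [zhangLiu_eq_diagD_mul_pascal1]
    exact diagD_mul_pascal1_pow_eq_one_iff n hn (sq_ne_one_iff.2 ⟨hx1, hx2⟩) (x * y) k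
  exact ⟨orderOf_eq_orderOf_iff.2 key, fun k _ => key k⟩
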